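/- arXiv:math/9307219 — 2 statements merged into one kernel-verified Lean document; each statement's English description precedes it below -/
import Mathlib

section
/- Let (μ_n) be the moment sequence determined by the three-term recurrence p_{n+1}(x) = (x − b_n)p_n(x) − λ_n p_{n−1}(x) with b_n = q^{n−1}[n+1]_q + q^{n−1}[n]_q and λ_n = q^{2n−3}[n]_q[n]_q (i.e., μ_n is the (1,1) entry associated with the Jacobi matrix, equivalently given by the weighted Motzkin path generating function). Then μ_n = q^{−n}·[n]_q! for all n ≥ 0. -/
open Finset

namespace SS

variable {n : ℕ}

/-- `descB σ j = true` iff there is a descent between positions `j` and `j+1`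
in the word `σ(1)σ(2)⋯σ(n)`. -/
def descB (σ : Equiv.Perm (Fin n)) (j : ℕ) : Bool :=
  if h : j + 1 < n then decide ((σ ⟨j+1, h⟩) < σ ⟨j, Nat.lt_of_succ_lt h⟩) else false

/-- The index of the maximal increasing run containing position `p`. -/
def runIdx (σ : Equiv.Perm (Fin n)) (p : ℕ) : ℕ :=
  ((Finset.range p).filter (fun j => descB σ j = true)).card

/-- The index of the run containing the value `v`. -/
def runOf (σ : Equiv.Perm (Fin n)) (v : Fin n) : ℕ := runIdx σ (σ.symm v).val

/-- The number of maximal increasing runs of `σ`. -/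
def runCount (σ : Equiv.Perm (Fin n)) : ℕ :=
  if n = 0 then 0 else runIdx σ n + 1

/-- `lsgAt σ v` : number of runs strictly to the left of (the run of) `v`
containing both an element smaller than `v` and an element greater than `v`. -/
def lsgAt (σ : Equiv.Perm (Fin n)) (v : Fin n) : ℕ :=
  ((Finset.range (runCount σ)).filter (fun r => r < runOf σ v ∧
      (∃ a : Fin n, runOf σ a = r ∧ a < v) ∧ (∃ b : Fin n, runOf σ b = r ∧ v < b))).card

/-- `rsgAt σ v` : number of runs strictly to the right of `v`
containing both an element smaller than `v` and an element greater than `v`. -/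
def rsgAt (σ : Equiv.Perm (Fin n)) (v : Fin n) : ℕ :=
  ((Finset.range (runCount σ)).filter (fun r => runOf σ v < r ∧
      (∃ a : Fin n, runOf σ a = r ∧ a < v) ∧ (∃ b : Fin n, runOf σ b = r ∧ v < b))).card

def lsg (σ : Equiv.Perm (Fin n)) : ℕ := ∑ v : Fin n, lsgAt σ v
def rsg (σ : Equiv.Perm (Fin n)) : ℕ := ∑ v : Fin n, rsgAt σ v

/-- position `p` begins a maximal increasing run. -/
def startsB (σ : Equiv.Perm (Fin n)) (p : ℕ) : Bool := p == 0 || descB σ (p - 1)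

/-- position `p` ends a maximal increasing run. -/
def endsB (σ : Equiv.Perm (Fin n)) (p : ℕ) : Bool := p + 1 == n || descB σ p

def openerB (σ : Equiv.Perm (Fin n)) (v : Fin n) : Bool :=
  startsB σ (σ.symm v).val && !endsB σ (σ.symm v).val
def closerB (σ : Equiv.Perm (Fin n)) (v : Fin n) : Bool :=
  endsB σ (σ.symm v).val && !startsB σ (σ.symm v).val
def singB (σ : Equiv.Perm (Fin n)) (v : Fin n) : Bool :=
  startsB σ (σ.symm v).val && endsB σ (σ.symm v).val
def contB (σ : Equiv.Perm (Fin n)) (v : Fin n) : Bool :=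
  !startsB σ (σ.symm v).val && !endsB σ (σ.symm v).val

def lsgOp (σ : Equiv.Perm (Fin n)) : ℕ :=
  ∑ v ∈ univ.filter (fun v : Fin n => openerB σ v = true), lsgAt σ v
def rsgOp (σ : Equiv.Perm (Fin n)) : ℕ :=
  ∑ v ∈ univ.filter (fun v : Fin n => openerB σ v = true), rsgAt σ v
def lsgClos (σ : Equiv.Perm (Fin n)) : ℕ :=
  ∑ v ∈ univ.filter (fun v : Fin n => closerB σ v = true), lsgAt σ v
def rsgClos (σ : Equiv.Perm (Fin n)) : ℕ :=
  ∑ v ∈ univ.filter (fun v : Fin n => closerB σ v = true), rsgAt σ v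
def lsgSing (σ : Equiv.Perm (Fin n)) : ℕ :=
  ∑ v ∈ univ.filter (fun v : Fin n => singB σ v = true), lsgAt σ v
def rsgSing (σ : Equiv.Perm (Fin n)) : ℕ :=
  ∑ v ∈ univ.filter (fun v : Fin n => singB σ v = true), rsgAt σ v
def lsgCont (σ : Equiv.Perm (Fin n)) : ℕ :=
  ∑ v ∈ univ.filter (fun v : Fin n => contB σ v = true), lsgAt σ v
def rsgCont (σ : Equiv.Perm (Fin n)) : ℕ :=
  ∑ v ∈ univ.filter (fun v : Fin n => contB σ v = true), rsgAt σ v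

/-- `[m]_q = 1 + q + ⋯ + q^{m-1}`. -/
def qint {R : Type*} [CommRing R] (q : R) (m : ℕ) : R := ∑ i ∈ Finset.range m, q ^ i

/-- `[n]_q! = [1]_q [2]_q ⋯ [n]_q`. -/
def qfact {R : Type*} [CommRing R] (q : R) (n : ℕ) : R := ∏ m ∈ Finset.range n, qint q (m+1)

/-- `moment b lam l h` : sum of the weights of all weighted Motzkin paths with `l` steps
starting at height `h` and ending at height `0`, where up steps have weight `1`,
a level step at height `k` has weight `b k`, and a down step from height `k`
has weight `lam k`.  The `n`th moment of the corresponding monic orthogonal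
polynomial sequence is `moment b lam n 0`. -/
def moment {R : Type*} [CommRing R] (b lam : ℕ → R) : ℕ → ℕ → R
  | 0, h => if h = 0 then 1 else 0
  | (l+1), h => moment b lam l (h+1) + b h * moment b lam l h +
      (if h = 0 then 0 else lam h * moment b lam l (h-1))

end SS

open SS

private lemma qint_add (q:ℚ) (a b : ℕ) : qint q (a+b) = qint q a + q^a * qint q b := by
  simp [qint, Finset.sum_range_add, Finset.mul_sum, pow_add]
private lemma qint_zero' (q:ℚ) : qint q 0 = 0 := by simp [qint]
private lemma qint_one' (q:ℚ) : qint q 1 = 1 := by simp [qint]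
private lemma qint_succ (q:ℚ) (m:ℕ) : qint q (m+1) = 1 + q * qint q m := by
  rw [add_comm, qint_add, qint_one', pow_one]
private lemma qfact_succ (q:ℚ) (l:ℕ) : qfact q (l+1) = qfact q l * qint q (l+1) :=
  Finset.prod_range_succ _ _

private def Rprod (q : ℚ) (l h : ℕ) : ℚ := ∏ i ∈ Finset.range h, qint q (l - i)
private lemma Rprod_zero (q:ℚ) (l:ℕ) : Rprod q l 0 = 1 := by simp [Rprod]
private lemma Rprod_succ (q:ℚ) (l h:ℕ) : Rprod q l (h+1) = Rprod q l h * qint q (l-h) :=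
  Finset.prod_range_succ _ _
private lemma Rprod_shift (q:ℚ) (l h:ℕ) : Rprod q (l+1) (h+1) = Rprod q l h * qint q (l+1) := by
  rw [Rprod, Finset.prod_range_succ']
  simp [Rprod, Nat.succ_sub_succ]
private lemma Rprod_eq_zero (q:ℚ) {l h:ℕ} (hlt : l < h) : Rprod q l h = 0 :=
  Finset.prod_eq_zero (Finset.mem_range.2 hlt) (by simp [qint_zero'])

private lemma scalarId (q : ℚ) (h s : ℕ) :
    qint q (h+s)^2 = q^(2*h+1) * qint q (s-1) * qint q s
      + q^h * (qint q (h+1) + qint q h) * qint q s + (qint q h)^2 := by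
  cases s with
  | zero => simp [qint_zero']
  | succ t =>
    rw [qint_add q h (t+1), qint_add q h 1, qint_succ q t, qint_one', Nat.add_sub_cancel]
    ring

private lemma momKey (q : ℚ) (hq : q ≠ 0) : ∀ l h,
    moment (fun m => q ^ ((m : ℤ) - 1) * qint q (m + 1) + q ^ ((m : ℤ) - 1) * qint q m)
           (fun m => q ^ (2 * (m : ℤ) - 3) * (qint q m) ^ 2) l h
      = q ^ ((h:ℤ)*((h:ℤ)-1) - (l:ℤ)) * qfact q l * Rprod q l h := by
  intro l
  induction l with
  | zero =>
    intro h
    cases h with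
    | zero => simp [moment, qfact, Rprod_zero]
    | succ k => simp [moment, Rprod_eq_zero q (Nat.succ_pos k)]
  | succ l IH =>
    intro h
    rcases Nat.lt_or_ge (l+1) h with hc | hc
    · have h0 : h ≠ 0 := by omega
      simp only [moment, IH, if_neg h0]
      rw [Rprod_eq_zero q hc, Rprod_eq_zero q (show l < h+1 by omega),
        Rprod_eq_zero q (show l < h by omega), Rprod_eq_zero q (show l < h-1 by omega)]
      ring
    · cases h with
      | zero =>
        simp only [moment, IH, if_pos rfl]
        rw [Rprod_succ, Rprod_zero, Rprod_zero, qfact_succ]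
        norm_num [qint_zero', qint_one', qint_succ q l]
        rw [show (-1 + -(l:ℤ)) = -((l+1 : ℕ):ℤ) from by push_cast; ring, zpow_neg, zpow_natCast]
        field_simp
        ring
      | succ k =>
        obtain ⟨s, rfl⟩ : ∃ s, l = k + s := ⟨l - k, by omega⟩
        simp only [moment, if_neg (Nat.succ_ne_zero k), Nat.add_sub_cancel, IH]
        rw [Rprod_succ q (k+s) (k+1), Rprod_succ q (k+s) k, Nat.add_sub_cancel_left,
          show k+s-(k+1) = s-1 from by omega, Rprod_shift q (k+s) k, qfact_succ q (k+s),
          show k+s+1 = k+1+s from by omega]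
        have h1 : q ^ ((↑(k+1+1)*(↑(k+1+1)-1) - ↑(k+s) : ℤ)) = q ^ ((↑(k+1)*(↑(k+1)-1) - ↑(k+1+s) : ℤ)) * q ^ (2*(k+1)+1 : ℕ) := by
          rw [← zpow_natCast q (2*(k+1)+1), ← zpow_add₀ hq]; congr 1; push_cast; ring
        have h2 : q ^ ((↑(k+1)-1 : ℤ)) * q ^ ((↑(k+1)*(↑(k+1)-1) - ↑(k+s) : ℤ)) = q ^ ((↑(k+1)*(↑(k+1)-1) - ↑(k+1+s) : ℤ)) * q ^ (k+1 : ℕ) := by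
          rw [← zpow_natCast q (k+1), ← zpow_add₀ hq, ← zpow_add₀ hq]; congr 1; push_cast; ring
        have h3 : q ^ ((2*↑(k+1)-3 : ℤ)) * q ^ ((↑k*(↑k-1) - ↑(k+s) : ℤ)) = q ^ ((↑(k+1)*(↑(k+1)-1) - ↑(k+1+s) : ℤ)) := by
          rw [← zpow_add₀ hq]; congr 1; push_cast; ring
        linear_combination (qfact q (k+s)*Rprod q (k+s) k*qint q s*qint q (s-1)) * h1
          + (qfact q (k+s)*Rprod q (k+s) k*qint q s*(qint q (k+1+1)+qint q (k+1))) * h2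
          + (qfact q (k+s)*Rprod q (k+s) k*qint q (k+1)^2) * h3
          - (q ^ ((↑(k+1)*(↑(k+1)-1) - ↑(k+1+s) : ℤ))*qfact q (k+s)*Rprod q (k+s) k) * scalarId q (k+1) s


open SS in
/-- Moments for `b_n = q^{n-1}[n+1]_q + q^{n-1}[n]_q`, `λ_n = q^{2n-3}[n]_q^2`
are `μ_n = q^{-n} [n]_q!`. -/
theorem stmt6 (q : ℚ) (hq : q ≠ 0) (n : ℕ) :
    moment (fun m => q ^ ((m : ℤ) - 1) * qint q (m + 1) + q ^ ((m : ℤ) - 1) * qint q m)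
           (fun m => q ^ (2 * (m : ℤ) - 3) * (qint q m) ^ 2) n 0
      = q ^ (-(n : ℤ)) * qfact q n := by
  have h := momKey q hq n 0
  rw [Rprod_zero] at h
  simpa using h
end

section
/- Let (μ_n) be the moment sequence determined by the recurrence coefficients b_n = q^{n+1}[n+1]_q + q^{n−1}[n]_q and λ_n = q^{2n−1}([n]_q)^2 (via the weighted Motzkin path formula). Then μ_0 = 1 and μ_n = q·[n]_q! for all n ≥ 1. -/
open Finset

/-!
Let `M l h` be the weighted sum over Motzkin paths of length `l` from height `h` down to `0`;
it is determined by `M 0 h = δ_{h0}` and the one-step recurrence. For paths of positive length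
`M (l + 1) h = q^{h²} [l]!_q · [l+1]_q [l]_q ⋯ [l-h+2]_q · ([l+2]_q - q^h)`:
this holds for `l = 0` by inspection, and it propagates along the recurrence because, after
cancelling the common factors, the recurrence becomes a polynomial identity in `q`, `[j]_q` and
`[l+1-j]_q` (where `h = j + 1`). At `h = 0` the formula gives `[l]!_q (q [l+1]_q) = q [l+1]_q!`.
-/

namespace SS

theorem moment_add_eq_of_recurrence {R : Type*} [CommRing R] {b lam : ℕ → R}
    (F : ℕ → ℕ → R) (l₀ : ℕ) (hinit : ∀ h, moment b lam l₀ h = F 0 h)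
    (hrec : ∀ l h, F (l + 1) h =
      F l (h + 1) + b h * F l h + (if h = 0 then 0 else lam h * F l (h - 1))) :
    ∀ l h, moment b lam (l₀ + l) h = F l h := by
  intro l
  induction l with
  | zero => exact hinit
  | succ l ih =>
    intro h
    rw [hrec, ← ih, ← ih, ← ih]
    rfl

section QArith

variable {R : Type*} [CommRing R] (q : R)

theorem qint_zero : qint q 0 = 0 := sum_range_zero _

theorem qint_succ (n : ℕ) : qint q (n + 1) = 1 + q * qint q n := by
  rw [qint, geom_sum_succ, add_comm]; rfl

theorem qint_add (m n : ℕ) : qint q (m + n) = qint q m + q ^ m * qint q n := by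
  simp only [qint, sum_range_add, pow_add, mul_sum]

theorem pow_eq_one_add_sub_one_mul_qint (n : ℕ) : q ^ n = 1 + (q - 1) * qint q n := by
  unfold qint
  linear_combination (geom_sum_mul q n).symm

theorem qint_mul_self_eq_mul_succ_pred (m : ℕ) :
    qint q m * qint q m = qint q m * (1 + q * qint q (m - 1)) := by
  cases m with
  | zero => simp [qint_zero]
  | succ m => rw [qint_succ, Nat.add_sub_cancel]

/-- `closedMoment_succ_succ` for `n = l + 1`, divided by the common factor
`q^{(j+1)²} [l]!_q [l+1]_q ⋯ [l-j+2]_q`. Writing `n = j + k` and using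
`q [k]_q [k-1]_q = [k]_q² - [k]_q` (true also for `k = 0`), it becomes a polynomial identity in
`q`, `[j]_q` and `[k]_q`. -/
theorem qint_step_identity {j n : ℕ} (hj : j ≤ n) :
    qint q n * qint q (n + 1) * (qint q (n + 2) - q ^ (j + 1)) =
      q ^ (2 * j + 3) * qint q (n - j) * qint q (n - j - 1) * (qint q (n + 1) - q ^ (j + 2)) +
      q ^ j * (q ^ 2 * qint q (j + 2) + qint q (j + 1)) * qint q (n - j) *
        (qint q (n + 1) - q ^ (j + 1)) +
      qint q (j + 1) ^ 2 * (qint q (n + 1) - q ^ j) := by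
  obtain ⟨k, rfl⟩ := Nat.exists_eq_add_of_le hj
  have hQ := pow_eq_one_add_sub_one_mul_qint q j
  have hac := qint_mul_self_eq_mul_succ_pred q k
  rw [Nat.add_sub_cancel_left, qint_succ q (j + k + 1), qint_succ q (j + k), qint_succ q (j + 1),
    qint_succ q j, qint_add, show q ^ (2 * j + 3) = (q ^ j) ^ 2 * q ^ 3 by ring,
    show q ^ (j + 2) = q ^ j * q ^ 2 by ring, pow_succ q j]
  generalize q ^ j = Q, qint q j = x, qint q k = a, qint q (k - 1) = c at hQ hac ⊢
  linear_combination (norm := skip) q ^ 2 * Q ^ 2 * (1 + q * (x + Q * a) - q ^ 2 * Q) * hac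
  subst hQ
  ring

theorem qfact_succ (n : ℕ) : qfact q (n + 1) = qfact q n * qint q (n + 1) :=
  prod_range_succ _ n

def qfalling (n h : ℕ) : R := ∏ i ∈ range h, qint q (n - i)

theorem qfalling_zero (n : ℕ) : qfalling q n 0 = 1 := prod_range_zero _

theorem qfalling_succ (n h : ℕ) : qfalling q n (h + 1) = qfalling q n h * qint q (n - h) :=
  prod_range_succ _ h

theorem qfalling_succ_succ (n h : ℕ) :
    qfalling q (n + 1) (h + 1) = qint q (n + 1) * qfalling q n h := by
  rw [qfalling, prod_range_succ', mul_comm]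
  simp only [Nat.sub_zero, Nat.add_sub_add_right]
  rfl

theorem qfalling_eq_zero_of_lt {n h : ℕ} (hnh : n < h) : qfalling q n h = 0 :=
  prod_eq_zero (mem_range.2 hnh) (by rw [Nat.sub_self, qint_zero])

end QArith

section Moments

variable {K : Type*} [Field K] (q : K)

def bCoeff (m : ℕ) : K := q ^ ((m : ℤ) + 1) * qint q (m + 1) + q ^ ((m : ℤ) - 1) * qint q m

def lamCoeff (m : ℕ) : K := q ^ (2 * (m : ℤ) - 1) * (qint q m) ^ 2

theorem bCoeff_zero : bCoeff q 0 = q := by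
  simp [bCoeff, qint_zero, qint_succ]

theorem bCoeff_succ (j : ℕ) :
    bCoeff q (j + 1) = q ^ (j + 2) * qint q (j + 2) + q ^ j * qint q (j + 1) := by
  rw [bCoeff, show ((j + 1 : ℕ) : ℤ) + 1 = ((j + 2 : ℕ) : ℤ) by push_cast; ring,
    show ((j + 1 : ℕ) : ℤ) - 1 = (j : ℤ) by push_cast; ring, zpow_natCast, zpow_natCast]

theorem lamCoeff_succ (j : ℕ) : lamCoeff q (j + 1) = q ^ (2 * j + 1) * qint q (j + 1) ^ 2 := by
  rw [lamCoeff, show 2 * ((j + 1 : ℕ) : ℤ) - 1 = ((2 * j + 1 : ℕ) : ℤ) by push_cast; ring,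
    zpow_natCast]

/-- Indexed by `l` for paths of length `l + 1`: no formula of this shape covers length `0`. -/
def closedMoment (l h : ℕ) : K :=
  q ^ (h ^ 2) * qfact q l * qfalling q (l + 1) h * (qint q (l + 2) - q ^ h)

theorem moment_one_eq_closedMoment (h : ℕ) :
    moment (bCoeff q) (lamCoeff q) 1 h = closedMoment q 0 h := by
  rcases h with _ | _ | h
  · simp [moment, closedMoment, bCoeff_zero, qfact, qfalling_zero, qint_succ, qint_zero]
  · simp [moment, closedMoment, lamCoeff_succ, qfact, qfalling_succ, qfalling_zero, qint_succ,
      qint_zero]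
  · simp [moment, closedMoment, qfalling_eq_zero_of_lt]

theorem closedMoment_succ_zero (l : ℕ) :
    closedMoment q (l + 1) 0 = closedMoment q l 1 + bCoeff q 0 * closedMoment q l 0 := by
  simp only [closedMoment, bCoeff_zero, qfalling_zero, qfalling_succ, Nat.sub_zero, qfact_succ,
    qint_succ]
  ring

theorem closedMoment_succ_succ (l j : ℕ) :
    closedMoment q (l + 1) (j + 1) = closedMoment q l (j + 2) +
      bCoeff q (j + 1) * closedMoment q l (j + 1) + lamCoeff q (j + 1) * closedMoment q l j := by
  rw [closedMoment, closedMoment, closedMoment, closedMoment, bCoeff_succ, lamCoeff_succ,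
    qfact_succ, qfalling_succ_succ q (l + 1) j, qfalling_succ q (l + 1) (j + 1),
    qfalling_succ q (l + 1) j]
  rcases le_or_gt j (l + 1) with hj | hj
  · have key := qint_step_identity q hj
    linear_combination (q ^ (j ^ 2) * qfact q l * qfalling q (l + 1) j * q ^ (2 * j + 1)) * key
  · simp [qfalling_eq_zero_of_lt q hj]

theorem closedMoment_succ (l h : ℕ) :
    closedMoment q (l + 1) h = closedMoment q l (h + 1) + bCoeff q h * closedMoment q l h +
      (if h = 0 then 0 else lamCoeff q h * closedMoment q l (h - 1)) := by
  rcases h with _ | j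
  · simpa using closedMoment_succ_zero q l
  · simpa using closedMoment_succ_succ q l j

theorem moment_succ_eq_closedMoment (l h : ℕ) :
    moment (bCoeff q) (lamCoeff q) (l + 1) h = closedMoment q l h := by
  rw [Nat.add_comm]
  exact moment_add_eq_of_recurrence _ 1 (moment_one_eq_closedMoment q) (closedMoment_succ q) l h

theorem closedMoment_zero_right (l : ℕ) : closedMoment q l 0 = q * qfact q (l + 1) := by
  simp only [closedMoment, qfalling_zero, qfact_succ, qint_succ]
  ring

end Moments

end SS

open SS in
theorem stmt7_general (q : ℚ) :
    moment (fun m => q ^ ((m : ℤ) + 1) * qint q (m + 1) + q ^ ((m : ℤ) - 1) * qint q m)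
           (fun m => q ^ (2 * (m : ℤ) - 1) * (qint q m) ^ 2) 0 0 = 1 ∧
    ∀ n : ℕ, 1 ≤ n →
      moment (fun m => q ^ ((m : ℤ) + 1) * qint q (m + 1) + q ^ ((m : ℤ) - 1) * qint q m)
             (fun m => q ^ (2 * (m : ℤ) - 1) * (qint q m) ^ 2) n 0
        = q * qfact q n := by
  refine ⟨rfl, fun n hn => ?_⟩
  obtain ⟨l, rfl⟩ := Nat.exists_eq_add_of_le' hn
  exact (moment_succ_eq_closedMoment q l 0).trans (closedMoment_zero_right q l)

open SS in
/-- Moments for `b_n = q^{n+1}[n+1]_q + q^{n-1}[n]_q`, `λ_n = q^{2n-1}[n]_q^2`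
are `μ_0 = 1` and `μ_n = q [n]_q!` for `n ≥ 1`. -/
theorem stmt7 (q : ℚ) (hq : q ≠ 0) :
    moment (fun m => q ^ ((m : ℤ) + 1) * qint q (m + 1) + q ^ ((m : ℤ) - 1) * qint q m)
           (fun m => q ^ (2 * (m : ℤ) - 1) * (qint q m) ^ 2) 0 0 = 1 ∧
    ∀ n : ℕ, 1 ≤ n →
      moment (fun m => q ^ ((m : ℤ) + 1) * qint q (m + 1) + q ^ ((m : ℤ) - 1) * qint q m)
             (fun m => q ^ (2 * (m : ℤ) - 1) * (qint q m) ^ 2) n 0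
        = q * qfact q n :=
  stmt7_general q
end
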